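/- arXiv:0809.1147 — 6 statements merged into one kernel-verified Lean document; each statement's English description precedes it below -/
import Mathlib

section
/- For every ξ ∈ ℝⁿ with |ξ|⁴ ≤ 4ξ₁² (i.e. ξ ∈ A) and every t ≥ 0, the solution g of g'' + |ξ|² g' + ξ₁² g = 0 with g(0)=0, g'(0)=1 satisfies |g(t)| ≤ t·e^{−|ξ|² t/2}. -/
/-- for `ξ ∈ A` (i.e. `|ξ|⁴ ≤ 4ξ₁²`) and `t ≥ 0`, the solution of
`g'' + |ξ|²g' + ξ₁²g = 0`, `g 0 = 0`, `g' 0 = 1` satisfies `|g t| ≤ t·e^{-|ξ|²t/2}`. -/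
theorem stmt3 (n : ℕ) [NeZero n] (ξ : EuclideanSpace ℝ (Fin n))
    (hA : ‖ξ‖ ^ 4 ≤ 4 * (ξ 0) ^ 2) (g : ℝ → ℝ) (hg : ContDiff ℝ (⊤ : ℕ∞) g)
    (hode : ∀ t : ℝ, deriv (deriv g) t + ‖ξ‖ ^ 2 * deriv g t + (ξ 0) ^ 2 * g t = 0)
    (h0 : g 0 = 0) (h1 : deriv g 0 = 1) :
    ∀ t : ℝ, 0 ≤ t → |g t| ≤ t * Real.exp (-(‖ξ‖ ^ 2) * t / 2) := by
  intro t ht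
  set b : ℝ := ‖ξ‖ ^ 2 / 2 with hb
  set c : ℝ := (ξ 0) ^ 2 with hc
  have hbc : b ^ 2 ≤ c := by nlinarith [hA]
  set ω2 : ℝ := c - b ^ 2 with hω
  have hω0 : 0 ≤ ω2 := by simp [hω]; linarith
  have hg' : ContDiff ℝ (⊤ : ℕ∞) g := hg.of_le (mod_cast le_top)
  have hgdiff : Differentiable ℝ g := hg'.differentiable (by norm_num)
  have hgd : Differentiable ℝ (deriv g) :=
    ((contDiff_infty_iff_deriv.mp hg').2).differentiable (by norm_num)
  set k : ℝ → ℝ := fun s => g s * Real.exp (b * s) with hk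
  set k1 : ℝ → ℝ := fun s => (deriv g s + b * g s) * Real.exp (b * s) with hk1
  have hDk : ∀ s : ℝ, HasDerivAt k (k1 s) s := by
    intro s
    have e : HasDerivAt (fun s : ℝ => Real.exp (b * s)) (Real.exp (b * s) * b) s := by
      simpa using ((hasDerivAt_id s).const_mul b).exp
    have := ((hgdiff s).hasDerivAt.mul e)
    refine this.congr_deriv ?_
    simp only [hk1]; ring
  have hDk1 : ∀ s : ℝ, HasDerivAt k1 (-ω2 * k s) s := by
    intro s
    have e : HasDerivAt (fun s : ℝ => Real.exp (b * s)) (Real.exp (b * s) * b) s := by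
      simpa using ((hasDerivAt_id s).const_mul b).exp
    have d1 : HasDerivAt (fun s => deriv g s + b * g s)
        (deriv (deriv g) s + b * deriv g s) s :=
      (hgd s).hasDerivAt.add (((hgdiff s).hasDerivAt).const_mul b)
    have := d1.mul e
    refine this.congr_deriv ?_
    have ho := hode s
    have hgg : deriv (deriv g) s = - (2 * b) * deriv g s - c * g s := by
      have h2b : ‖ξ‖ ^ 2 = 2 * b := by rw [hb]; ring
      rw [h2b] at ho; linarith
    simp only [hk, hω, hgg]
    ring
  set E : ℝ → ℝ := fun s => k1 s ^ 2 + ω2 * k s ^ 2 with hEdef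
  have hDE : ∀ s : ℝ, HasDerivAt E 0 s := by
    intro s
    have := ((hDk1 s).pow 2).add (((hDk s).pow 2).const_mul ω2)
    refine this.congr_deriv ?_
    ring
  have hEconst : ∀ s : ℝ, E s = 1 := by
    intro s
    have hc0 := is_const_of_deriv_eq_zero (f := E)
      (fun x => (hDE x).differentiableAt) (fun x => (hDE x).deriv) s 0
    rw [hc0]
    simp [hEdef, hk, hk1, h0, h1]
  have hbd : ∀ s : ℝ, |k1 s| ≤ 1 := by
    intro s
    have hE1 : k1 s ^ 2 + ω2 * k s ^ 2 = 1 := hEconst s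
    rw [abs_le]
    constructor <;> nlinarith [sq_nonneg (k s), mul_nonneg hω0 (sq_nonneg (k s))]
  have hkt : |k t| ≤ t := by
    have := Convex.norm_image_sub_le_of_norm_hasDerivWithin_le
      (f := k) (f' := k1) (s := Set.univ) (C := 1)
      (fun x _ => (hDk x).hasDerivWithinAt)
      (fun x _ => by simpa using hbd x) convex_univ (Set.mem_univ 0) (Set.mem_univ t)
    rw [abs_mul, abs_of_pos (Real.exp_pos _)]
    simpa [hk, h0, Real.norm_eq_abs, abs_of_nonneg ht] using this
  have hexp : Real.exp (-(‖ξ‖ ^ 2) * t / 2) = Real.exp (-(b * t)) := by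
    congr 1; rw [hb]; ring
  rw [hexp]
  have hgt : g t = k t * Real.exp (-(b * t)) := by
    simp [hk, mul_assoc, ← Real.exp_add]
  rw [hgt, abs_mul, abs_of_pos (Real.exp_pos _)]
  exact mul_le_mul_of_nonneg_right hkt (Real.exp_pos _).le
end

section
/- For every ξ ∈ ℝⁿ with |ξ|⁴ ≤ 4ξ₁² and every t ≥ 0, the solution g of g'' + |ξ|² g' + ξ₁² g = 0 with g(0)=0, g'(0)=1 satisfies |g'(t)| ≤ (1 + |ξ|² t)·e^{−|ξ|² t/2}. -/
/-- for `ξ` with `|ξ|⁴ ≤ 4ξ₁²` and `t ≥ 0`, the solution of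
`g'' + |ξ|²g' + ξ₁²g = 0`, `g 0 = 0`, `g' 0 = 1` satisfies
`|g'(t)| ≤ (1 + |ξ|²t)·e^{-|ξ|²t/2}`. -/
theorem stmt4 (n : ℕ) [NeZero n] (ξ : EuclideanSpace ℝ (Fin n))
    (hA : ‖ξ‖ ^ 4 ≤ 4 * (ξ 0) ^ 2) (g : ℝ → ℝ) (hg : ContDiff ℝ (⊤ : ℕ∞) g)
    (hode : ∀ t : ℝ, deriv (deriv g) t + ‖ξ‖ ^ 2 * deriv g t + (ξ 0) ^ 2 * g t = 0)
    (h0 : g 0 = 0) (h1 : deriv g 0 = 1) :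
    ∀ t : ℝ, 0 ≤ t →
      |deriv g t| ≤ (1 + ‖ξ‖ ^ 2 * t) * Real.exp (-(‖ξ‖ ^ 2) * t / 2) := by
  set b := ‖ξ‖ ^ 2 with hbdef
  set a := (ξ 0) ^ 2 with hadef
  have hb : 0 ≤ b := sq_nonneg _
  have hω2 : 0 ≤ a - b ^ 2 / 4 := by
    have hb2 : b ^ 2 = ‖ξ‖ ^ 4 := by rw [hbdef]; ring
    nlinarith [hA]
  set ω2 : ℝ := a - b ^ 2 / 4 with hω
  have hg2 : ContDiff ℝ ((⊤ : ℕ∞) : WithTop ℕ∞) g := hg.of_le (mod_cast le_top)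
  have hgd : Differentiable ℝ g := hg.differentiable (by simp)
  have hg'd : Differentiable ℝ (deriv g) :=
    (contDiff_infty_iff_deriv.mp hg2).2.differentiable (by simp)
  set p : ℝ → ℝ := fun t => Real.exp (b * t / 2) * g t with hpdef
  set q : ℝ → ℝ := fun t => Real.exp (b * t / 2) * (deriv g t + b / 2 * g t) with hqdef
  have hexp : ∀ t : ℝ, HasDerivAt (fun t => Real.exp (b * t / 2))
      (b / 2 * Real.exp (b * t / 2)) t := by
    intro t
    have hlin : HasDerivAt (fun t : ℝ => b * t / 2) (b / 2) t := by
      simpa using ((hasDerivAt_id t).const_mul b).div_const 2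
    simpa [mul_comm] using hlin.exp
  have hp : ∀ t, HasDerivAt p (q t) t := by
    intro t
    have := (hexp t).mul (hgd t).hasDerivAt
    refine this.congr_deriv ?_
    simp only [hqdef]
    ring
  have hq : ∀ t, HasDerivAt q (-ω2 * p t) t := by
    intro t
    have hinner : HasDerivAt (fun t => deriv g t + b / 2 * g t)
        (deriv (deriv g) t + b / 2 * deriv g t) t :=
      (hg'd t).hasDerivAt.add ((hgd t).hasDerivAt.const_mul (b / 2))
    have := (hexp t).mul hinner
    refine this.congr_deriv ?_
    have hd2 : deriv (deriv g) t = -(b * deriv g t) - a * g t := by linarith [hode t]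
    simp only [hpdef, hd2, hω]
    ring
  set E : ℝ → ℝ := fun t => (q t) ^ 2 + ω2 * (p t) ^ 2 with hEdef
  have hE : ∀ t, HasDerivAt E 0 t := by
    intro t
    have := ((hq t).pow 2).add (((hp t).pow 2).const_mul ω2)
    refine this.congr_deriv ?_
    push_cast
    ring
  have hEconst : ∀ t, E t = 1 := by
    have hdiff : Differentiable ℝ E := fun t => (hE t).differentiableAt
    intro t
    have hc := is_const_of_deriv_eq_zero hdiff (fun x => (hE x).deriv) t 0
    rw [hc]
    simp only [hEdef, hqdef, hpdef]
    norm_num [h0, h1]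
  have hqbound : ∀ t, |q t| ≤ 1 := by
    intro t
    have hEt : q t ^ 2 + ω2 * p t ^ 2 = 1 := hEconst t
    have hsq : (q t) ^ 2 ≤ 1 := by nlinarith [mul_nonneg hω2 (sq_nonneg (p t))]
    rw [abs_le]
    constructor <;> nlinarith [sq_nonneg (q t + 1), sq_nonneg (q t - 1)]
  have hpbound : ∀ t : ℝ, 0 ≤ t → |p t| ≤ t := by
    intro t ht
    have h0p : p 0 = 0 := by simp [hpdef, h0]
    have := Convex.norm_image_sub_le_of_norm_hasDerivWithin_le
      (f := p) (f' := q) (C := 1) (s := (Set.univ : Set ℝ))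
      (fun x _ => (hp x).hasDerivWithinAt)
      (fun x _ => by simpa [Real.norm_eq_abs] using hqbound x)
      convex_univ (Set.mem_univ 0) (Set.mem_univ t)
    simpa [h0p, Real.norm_eq_abs, abs_of_nonneg ht] using this
  intro t ht
  have hgt : deriv g t = Real.exp (-b * t / 2) * (q t - b / 2 * p t) := by
    have hexpand : q t - b / 2 * p t = Real.exp (b * t / 2) * deriv g t := by
      simp only [hqdef, hpdef]; ring
    rw [hexpand, show Real.exp (-b * t / 2) * (Real.exp (b * t / 2) * deriv g t)
        = (Real.exp (-b * t / 2) * Real.exp (b * t / 2)) * deriv g t from by ring,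
      ← Real.exp_add]
    ring_nf
    simp
  have habs : |q t - b / 2 * p t| ≤ 1 + b / 2 * t := by
    have h5 : |q t - b / 2 * p t| ≤ |q t| + |b / 2 * p t| := abs_sub _ _
    have h6 : |b / 2 * p t| = b / 2 * |p t| := by
      rw [abs_mul, abs_of_nonneg (by linarith : (0:ℝ) ≤ b / 2)]
    nlinarith [hqbound t, hpbound t ht, abs_nonneg (p t)]
  have hexppos := Real.exp_pos (-b * t / 2)
  calc |deriv g t| = Real.exp (-b * t / 2) * |q t - b / 2 * p t| := by
        rw [hgt, abs_mul, abs_of_pos hexppos]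
    _ ≤ Real.exp (-b * t / 2) * (1 + b / 2 * t) := by
        exact mul_le_mul_of_nonneg_left habs (le_of_lt hexppos)
    _ ≤ Real.exp (-b * t / 2) * (1 + b * t) := by
        have h7 : 1 + b / 2 * t ≤ 1 + b * t := by nlinarith
        exact mul_le_mul_of_nonneg_left h7 hexppos.le
    _ = (1 + b * t) * Real.exp (-b * t / 2) := mul_comm _ _
end

section
/- Let r > 2 and m = 1 − √(1 − 4/r²). For every ξ ∈ ℝⁿ with 4ξ₁² < |ξ|⁴ ≤ r²ξ₁² and every t ≥ 0, the function Ĝ(ξ,t) = (e^{λ₊t} − e^{λ₋t})/λ₀ with λ± = (−|ξ|² ± √(|ξ|⁴−4ξ₁²))/2, λ₀ = √(|ξ|⁴−4ξ₁²), satisfies 0 ≤ Ĝ(ξ,t) ≤ t·e^{−(m/2)|ξ|² t}. -/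
/-!
Ĝ is a difference quotient of the exponential: with λ₊ - λ₋ = λ₀, the tangent line bound
`1 + x ≤ eˣ` gives `0 ≤ (e^{λ₊t} - e^{λ₋t})/λ₀ ≤ t e^{λ₊t}`. The upper constraint
`|ξ|⁴ ≤ r²ξ₁²` yields `λ₀ ≤ |ξ|² √(1 - 4/r²)`, i.e. `λ₊ ≤ -(m/2)|ξ|²`.
-/

open Real

theorem Real.exp_sub_exp_le_mul_exp (a b : ℝ) : exp a - exp b ≤ (a - b) * exp a := by
  have h := mul_le_mul_of_nonneg_right (add_one_le_exp (b - a)) (exp_pos a).le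
  rw [← exp_add, sub_add_cancel] at h
  linarith

theorem Real.exp_mul_sub_exp_mul_div_mem_Icc {p q t : ℝ} (hqp : q ≤ p) (ht : 0 ≤ t) :
    (exp (p * t) - exp (q * t)) / (p - q) ∈ Set.Icc 0 (t * exp (p * t)) := by
  have hd : 0 ≤ p - q := sub_nonneg.2 hqp
  refine ⟨div_nonneg (sub_nonneg.2 (exp_le_exp.2 (mul_le_mul_of_nonneg_right hqp ht))) hd, ?_⟩
  rcases hd.eq_or_lt with hpq | hpq
  · rw [← hpq, div_zero]
    positivity
  · rw [div_le_iff₀ hpq]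
    calc exp (p * t) - exp (q * t) ≤ (p * t - q * t) * exp (p * t) := exp_sub_exp_le_mul_exp _ _
      _ = t * exp (p * t) * (p - q) := by ring

theorem Real.sqrt_sq_sub_le_mul_sqrt {N X r : ℝ} (hN : 0 ≤ N) (hr : r ≠ 0)
    (h : N ^ 2 ≤ r ^ 2 * X) : √(N ^ 2 - 4 * X) ≤ N * √(1 - 4 / r ^ 2) := by
  have hr2 : 0 < r ^ 2 := by positivity
  have hX : N ^ 2 / r ^ 2 ≤ X := by rwa [div_le_iff₀ hr2, mul_comm]
  calc √(N ^ 2 - 4 * X) ≤ √(N ^ 2 * (1 - 4 / r ^ 2)) := by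
        apply sqrt_le_sqrt
        rw [mul_sub, mul_one, mul_div_assoc', mul_comm (N ^ 2) 4, mul_div_assoc]
        linarith
    _ = N * √(1 - 4 / r ^ 2) := by rw [sqrt_mul (sq_nonneg N), sqrt_sq hN]

theorem stmt5_general (n : ℕ) [NeZero n] (r : ℝ) (hr : 2 < r)
    (ξ : EuclideanSpace ℝ (Fin n))
    (hhigh : ‖ξ‖ ^ 4 ≤ r ^ 2 * (ξ 0) ^ 2) :
    ∀ m lam0 lamp lamm : ℝ, ∀ G : ℝ → ℝ,
      m = 1 - Real.sqrt (1 - 4 / r ^ 2) →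
      lam0 = Real.sqrt (‖ξ‖ ^ 4 - 4 * (ξ 0) ^ 2) →
      lamp = (-‖ξ‖ ^ 2 + lam0) / 2 →
      lamm = (-‖ξ‖ ^ 2 - lam0) / 2 →
      G = (fun t : ℝ => (Real.exp (lamp * t) - Real.exp (lamm * t)) / lam0) →
      ∀ t : ℝ, 0 ≤ t →
        0 ≤ G t ∧ G t ≤ t * Real.exp (-(m / 2) * ‖ξ‖ ^ 2 * t) := by
  intro m lam0 lamp lamm G hm hlam0 hp hmm hG t ht
  have hpow : ‖ξ‖ ^ 4 = (‖ξ‖ ^ 2) ^ 2 := by ring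
  have hlam0_le : lam0 ≤ ‖ξ‖ ^ 2 * √(1 - 4 / r ^ 2) := by
    rw [hlam0, hpow]
    exact sqrt_sq_sub_le_mul_sqrt (sq_nonneg _) (by linarith : 0 < r).ne' (hpow ▸ hhigh)
  have hlam0_nonneg : 0 ≤ lam0 := hlam0 ▸ sqrt_nonneg _
  have hlamp_le : lamp ≤ -(m / 2) * ‖ξ‖ ^ 2 := by rw [hp, hm]; linarith
  have hgap : lamp - lamm = lam0 := by rw [hp, hmm]; ring
  obtain ⟨hG_nonneg, hG_le⟩ := exp_mul_sub_exp_mul_div_mem_Icc (by linarith : lamm ≤ lamp) ht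
  rw [hgap] at hG_nonneg hG_le
  subst hG
  refine ⟨hG_nonneg, hG_le.trans ?_⟩
  gcongr

/-- for `r > 2`, `m = 1 - √(1 - 4/r²)`, and `ξ` with `4ξ₁² < |ξ|⁴ ≤ r²ξ₁²`,
the explicit solution `Ĝ(ξ,t) = (e^{λ₊t} - e^{λ₋t})/λ₀` satisfies
`0 ≤ Ĝ(ξ,t) ≤ t·e^{-(m/2)|ξ|²t}` for `t ≥ 0`. -/
theorem stmt5 (n : ℕ) [NeZero n] (r : ℝ) (hr : 2 < r)
    (ξ : EuclideanSpace ℝ (Fin n))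
    (hlow : 4 * (ξ 0) ^ 2 < ‖ξ‖ ^ 4) (hhigh : ‖ξ‖ ^ 4 ≤ r ^ 2 * (ξ 0) ^ 2) :
    ∀ m lam0 lamp lamm : ℝ, ∀ G : ℝ → ℝ,
      m = 1 - Real.sqrt (1 - 4 / r ^ 2) →
      lam0 = Real.sqrt (‖ξ‖ ^ 4 - 4 * (ξ 0) ^ 2) →
      lamp = (-‖ξ‖ ^ 2 + lam0) / 2 →
      lamm = (-‖ξ‖ ^ 2 - lam0) / 2 →
      G = (fun t : ℝ => (Real.exp (lamp * t) - Real.exp (lamm * t)) / lam0) →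
      ∀ t : ℝ, 0 ≤ t →
        0 ≤ G t ∧ G t ≤ t * Real.exp (-(m / 2) * ‖ξ‖ ^ 2 * t) :=
  stmt5_general n r hr ξ hhigh
end

section
/- Let r > 2 and m = 1 − √(1 − 4/r²). For every ξ ∈ ℝⁿ with |ξ|² ≤ r|ξ₁| and every t ≥ 0, the solution g of g'' + |ξ|² g' + ξ₁² g = 0 with g(0)=0, g'(0)=1 satisfies |g(t)| ≤ t·e^{−(m/2)|ξ|² t} and |g'(t)| ≤ (1 + |ξ|² t)·e^{−(m/2)|ξ|² t}. -/
set_option maxHeartbeats 1000000 in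
/-- for `r > 2`, `m = 1 - √(1 - 4/r²)`, `ξ ∈ Dᵣ` (i.e. `|ξ|² ≤ r|ξ₁|`) and
`t ≥ 0`, the solution of `g'' + |ξ|²g' + ξ₁²g = 0`, `g 0 = 0`, `g' 0 = 1` satisfies
`|g t| ≤ t·e^{-(m/2)|ξ|²t}` and `|g' t| ≤ (1 + |ξ|²t)·e^{-(m/2)|ξ|²t}`. -/
theorem stmt6 (n : ℕ) [NeZero n] (r : ℝ) (hr : 2 < r)
    (ξ : EuclideanSpace ℝ (Fin n)) (hD : ‖ξ‖ ^ 2 ≤ r * |ξ 0|)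
    (g : ℝ → ℝ) (hg : ContDiff ℝ (⊤ : ℕ∞) g)
    (hode : ∀ t : ℝ, deriv (deriv g) t + ‖ξ‖ ^ 2 * deriv g t + (ξ 0) ^ 2 * g t = 0)
    (h0 : g 0 = 0) (h1 : deriv g 0 = 1) :
    ∀ m : ℝ, m = 1 - Real.sqrt (1 - 4 / r ^ 2) →
      ∀ t : ℝ, 0 ≤ t →
        |g t| ≤ t * Real.exp (-(m / 2) * ‖ξ‖ ^ 2 * t) ∧
        |deriv g t| ≤ (1 + ‖ξ‖ ^ 2 * t) * Real.exp (-(m / 2) * ‖ξ‖ ^ 2 * t) := by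
  set b : ℝ := ‖ξ‖ ^ 2 with hbdef
  set c : ℝ := (ξ 0) ^ 2 with hcdef
  have hb : 0 ≤ b := sq_nonneg _
  have hc : 0 ≤ c := sq_nonneg _
  have hr0 : 0 < r := by linarith
  have hbc : b ^ 2 ≤ r ^ 2 * c := by
    have h1 : b ≤ r * |ξ 0| := hD
    nlinarith [abs_nonneg (ξ 0), sq_abs (ξ 0), hb]
  intro m hm t ht
  have hsq : Real.sqrt (1 - 4 / r ^ 2) ^ 2 = 1 - 4 / r ^ 2 := Real.sq_sqrt (by
    have h2 : 4 / r ^ 2 ≤ 1 := by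
      rw [div_le_one (by positivity)]; nlinarith
    linarith)
  have hm1 : m ≤ 1 := by
    rw [hm]; have := Real.sqrt_nonneg (1 - 4 / r ^ 2); linarith
  have hm0 : 0 < m := by
    rw [hm]
    have h4 : 0 < 4 / r ^ 2 := by positivity
    nlinarith [Real.sqrt_nonneg (1 - 4 / r ^ 2)]
  set α : ℝ := m / 2 * b with hα
  have hα0 : 0 ≤ α := by positivity
  have hαb : α ≤ b := by nlinarith
  set B : ℝ := b - 2 * α with hB
  have hB0 : 0 ≤ B := by rw [hB, hα]; nlinarith
  set C : ℝ := α ^ 2 - b * α + c with hC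
  have hmr : m / 2 * (1 - m / 2) = 1 / r ^ 2 := by
    rw [hm]
    linear_combination (-(1:ℝ)/4) * hsq
  have hC0 : 0 ≤ C := by
    have h1 : α ^ 2 - b * α = -(b ^ 2 * (1 / r ^ 2)) := by
      rw [hα]; linear_combination (-(b ^ 2)) * hmr
    rw [hC, h1]
    have h2 : b ^ 2 * (1 / r ^ 2) ≤ c := by
      rw [mul_one_div, div_le_iff₀ (by positivity)]; nlinarith
    linarith
  -- substituted functions
  set u : ℝ → ℝ := fun s => Real.exp (α * s) * g s with hu
  set v : ℝ → ℝ := fun s => Real.exp (α * s) * (deriv g s + α * g s) with hv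
  have hgd : Differentiable ℝ g := hg.differentiable (by simp)
  have hg'd : Differentiable ℝ (deriv g) :=
    (contDiff_infty_iff_deriv.mp (hg.of_le (mod_cast le_top))).2.differentiable (by simp)
  have hue : ∀ s : ℝ, HasDerivAt (fun s => Real.exp (α * s)) (α * Real.exp (α * s)) s := by
    intro s
    have h := ((hasDerivAt_id s).const_mul α).exp
    simpa [mul_comm] using h
  have hu' : ∀ s, HasDerivAt u (v s) s := by
    intro s
    have h := (hue s).mul (hgd s).hasDerivAt
    refine h.congr_deriv ?_
    simp only [hv]
    ring
  have hv' : ∀ s, HasDerivAt v (-B * v s - C * u s) s := by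
    intro s
    have hgs : HasDerivAt (fun s => deriv g s + α * g s)
        (deriv (deriv g) s + α * deriv g s) s :=
      ((hg'd s).hasDerivAt).add (((hgd s).hasDerivAt).const_mul α)
    have h := (hue s).mul hgs
    refine h.congr_deriv ?_
    have hrw : deriv (deriv g) s = -b * deriv g s - c * g s := by linarith [hode s]
    rw [hrw]
    simp only [hv, hu, hB, hC]
    ring
  set E : ℝ → ℝ := fun s => C * u s ^ 2 + v s ^ 2 with hE
  have hE' : ∀ s, HasDerivAt E (-(2 * B) * v s ^ 2) s := by
    intro s
    have h := (((hu' s).pow 2).const_mul C).add ((hv' s).pow 2)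
    refine h.congr_deriv ?_
    push_cast
    ring
  have hanti : Antitone E := by
    apply antitone_of_deriv_nonpos (fun x => (hE' x).differentiableAt)
    intro x
    rw [(hE' x).deriv]
    nlinarith [sq_nonneg (v x)]
  have hE0 : E 0 = 1 := by
    simp [hE, hu, hv, h0, h1]
  have hvle : ∀ s : ℝ, 0 ≤ s → |v s| ≤ 1 := by
    intro s hs
    have h2 := hanti hs
    rw [hE0] at h2
    have h3 : 0 ≤ C * u s ^ 2 := mul_nonneg hC0 (sq_nonneg _)
    have h4 : v s ^ 2 ≤ 1 := by
      have : C * u s ^ 2 + v s ^ 2 ≤ 1 := h2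
      linarith
    exact (sq_le_one_iff_abs_le_one _).mp h4
  have hut : |u t| ≤ t := by
    have key : ‖u t - u 0‖ ≤ 1 * ‖t - 0‖ := by
      apply Convex.norm_image_sub_le_of_norm_hasDerivWithin_le
        (f' := v) (fun x hx => (hu' x).hasDerivWithinAt)
        (fun x hx => by
          rw [Real.norm_eq_abs]
          exact hvle x hx.1)
        (convex_Icc 0 t) (Set.left_mem_Icc.2 ht) (Set.right_mem_Icc.2 ht)
    have hu0 : u 0 = 0 := by simp [hu, h0]
    rw [hu0, sub_zero, Real.norm_eq_abs, Real.norm_eq_abs, sub_zero, one_mul,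
      abs_of_nonneg ht] at key
    exact key
  have hexp : Real.exp (-(m / 2) * b * t) = (Real.exp (α * t))⁻¹ := by
    rw [← Real.exp_neg]
    congr 1
    rw [hα]; ring
  have hEt : (0:ℝ) < Real.exp (α * t) := Real.exp_pos _
  have hgt : |g t| ≤ t * Real.exp (-(m / 2) * b * t) := by
    have h5 : Real.exp (α * t) * |g t| ≤ t := by
      have : |u t| = Real.exp (α * t) * |g t| := by
        simp only [hu]; rw [abs_mul, abs_of_pos hEt]
      linarith [hut, this ▸ hut]
    rw [hexp, ← div_eq_mul_inv, le_div_iff₀ hEt]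
    nlinarith
  refine ⟨hgt, ?_⟩
  have hvt : |deriv g t + α * g t| * Real.exp (α * t) ≤ 1 := by
    have : |v t| = Real.exp (α * t) * |deriv g t + α * g t| := by
      simp only [hv]; rw [abs_mul, abs_of_pos hEt]
    nlinarith [hvle t ht]
  have h6 : |deriv g t| ≤ |deriv g t + α * g t| + α * |g t| := by
    have h := abs_add_le (deriv g t + α * g t) (-(α * g t))
    rw [abs_neg, abs_mul, abs_of_nonneg hα0] at h
    calc |deriv g t| = |deriv g t + α * g t + -(α * g t)| := by ring_nf
    _ ≤ _ := h
  rw [hexp, ← div_eq_mul_inv, le_div_iff₀ hEt]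
  have h7 : α * |g t| * Real.exp (α * t) ≤ α * t := by
    have h8 : |g t| * Real.exp (α * t) ≤ t := by
      have : |u t| = Real.exp (α * t) * |g t| := by
        simp only [hu]; rw [abs_mul, abs_of_pos hEt]
      nlinarith [hut]
    nlinarith
  have h9 : α * t ≤ b * t := by nlinarith
  nlinarith [abs_nonneg (deriv g t + α * g t), abs_nonneg (g t)]
end

section
/- Let ξ ∈ ℝⁿ satisfy |ξ|⁴ > 4ξ₁² and set λ₊ = (−|ξ|² + √(|ξ|⁴−4ξ₁²))/2. If additionally |ξ|² > r|ξ₁| for some r > 2 (i.e. ξ ∈ Dᵣᶜ), then λ₊ ≤ −ξ₁²/|ξ|². -/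
/-- if `|ξ|⁴ > 4ξ₁²` and `|ξ|² > r|ξ₁|` for some `r > 2`, then
`λ₊ = (-|ξ|² + √(|ξ|⁴ - 4ξ₁²))/2 ≤ -ξ₁²/|ξ|²`. -/
theorem stmt7 (n : ℕ) [NeZero n] (ξ : EuclideanSpace ℝ (Fin n))
    (h : 4 * (ξ 0) ^ 2 < ‖ξ‖ ^ 4) (r : ℝ) (hr : 2 < r) (hD : r * |ξ 0| < ‖ξ‖ ^ 2) :
    (-‖ξ‖ ^ 2 + Real.sqrt (‖ξ‖ ^ 4 - 4 * (ξ 0) ^ 2)) / 2 ≤ -(ξ 0) ^ 2 / ‖ξ‖ ^ 2 := by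
  set s : ℝ := ‖ξ‖ ^ 2 with hs
  set a : ℝ := (ξ 0) ^ 2 with ha
  have ha0 : 0 ≤ a := sq_nonneg _
  have hs0 : 0 < s := by nlinarith [sq_nonneg s]
  have key : Real.sqrt (‖ξ‖ ^ 4 - 4 * a) ≤ s - 2 * a / s := by
    have h1 : ‖ξ‖ ^ 4 - 4 * a ≤ (s - 2 * a / s) ^ 2 := by
      have : ‖ξ‖ ^ 4 = s ^ 2 := by ring
      rw [this]
      have h2 : (s - 2 * a / s) ^ 2 = s ^ 2 - 4 * a + 4 * a ^ 2 / s ^ 2 := by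
        field_simp; ring
      rw [h2]
      have : 0 ≤ 4 * a ^ 2 / s ^ 2 := by positivity
      linarith
    have h3 : 0 ≤ s - 2 * a / s := by
      rw [sub_nonneg, div_le_iff₀ hs0]
      nlinarith
    calc Real.sqrt (‖ξ‖ ^ 4 - 4 * a) ≤ Real.sqrt ((s - 2 * a / s) ^ 2) :=
          Real.sqrt_le_sqrt h1
      _ = s - 2 * a / s := Real.sqrt_sq h3
  have key2 := mul_le_mul_of_nonneg_right key hs0.le
  rw [sub_mul, div_mul_cancel₀ _ hs0.ne'] at key2
  rw [div_le_div_iff₀ (by norm_num) hs0]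
  nlinarith [key2]
end

section
/- Let n ≥ 3 and t > 0. Then ∫_{{ξ ∈ ℝⁿ : |ξ₁| ≤ |ξ'|}} e^{−(ξ₁²/|ξ'|²) t} · 1/(|ξ'|^{n−1}(1+|ξ'|²)) dξ ≤ C t^{−1/2}, where ξ' = (ξ₂,…,ξₙ) and C depends only on n. -/
/-!
On each slice `ξ' = y` with `y ≠ 0`, the `ξ₁`-integral is at most the full Gaussian integral
`∫ exp (-(ξ₁ / ‖y‖)² t) dξ₁ = √π ‖y‖ / √t`, and the slice over `y = 0` is a null set. What is
left is `√π / √t · ∫ ‖y‖ / (‖y‖ ^ (n - 1) (1 + ‖y‖²)) dy` over `ℝ^(n-1)`, which in polar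
coordinates is a multiple of `∫₀^∞ dr / (1 + r²) < ∞`.
-/

open MeasureTheory Set Real
open scoped ENNReal

theorem lintegral_exp_neg_sq_div_sq_mul {r t : ℝ} (hr : 0 < r) (ht : 0 < t) :
    ∫⁻ x : ℝ, ENNReal.ofReal (exp (-(x ^ 2 / r ^ 2) * t)) = ENNReal.ofReal (√π / √t * r) := by
  have hb : 0 < t / r ^ 2 := by positivity
  have hexp : ∀ x : ℝ, -(x ^ 2 / r ^ 2) * t = -(t / r ^ 2) * x ^ 2 := fun x => by ring
  simp_rw [hexp]
  rw [← ofReal_integral_eq_lintegral_ofReal (integrable_exp_neg_mul_sq hb)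
    (ae_of_all _ fun x => (exp_pos _).le), integral_gaussian, div_div_eq_mul_div,
    sqrt_div' _ ht.le, sqrt_mul pi_pos.le, sqrt_sq hr.le, mul_div_right_comm]

section Cone

variable {X : Type*} [NormedAddCommGroup X]

theorem lintegral_indicator_cone_section_le (w : X → ℝ≥0∞) {t : ℝ} (ht : 0 < t) (y : X) :
    ∫⁻ x : ℝ, {ξ : ℝ × X | |ξ.1| ≤ ‖ξ.2‖}.indicator
        (fun ξ => ENNReal.ofReal (exp (-(ξ.1 ^ 2 / ‖ξ.2‖ ^ 2) * t)) * w ξ.2) (x, y)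
      ≤ ENNReal.ofReal (√π / √t * ‖y‖) * w y := by
  rcases (norm_nonneg y).eq_or_lt with hy | hy
  · have hnull : ∀ᵐ x : ℝ, x ≠ 0 := measure_eq_zero_iff_ae_notMem.1 (measure_singleton 0)
    calc _ = ∫⁻ _ : ℝ, 0 := lintegral_congr_ae <| by
            filter_upwards [hnull] with x hx
            simp [← hy, hx]
      _ ≤ _ := by simp
  · calc _ ≤ ∫⁻ x : ℝ, ENNReal.ofReal (exp (-(x ^ 2 / ‖y‖ ^ 2) * t)) * w y :=
          lintegral_mono fun x => indicator_le_self _ _ (x, y)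
      _ = _ := by
          rw [lintegral_mul_const _ (by fun_prop), lintegral_exp_neg_sq_div_sq_mul hy ht]

theorem integral_cone_exp_mul_le [MeasurableSpace X] [OpensMeasurableSpace X]
    (ν : Measure X) [SFinite ν] {w : X → ℝ} (hw : 0 ≤ w) (hwm : Measurable w)
    (hint : Integrable (fun y => ‖y‖ * w y) ν) {t : ℝ} (ht : 0 < t) :
    ∫ ξ in {ξ : ℝ × X | |ξ.1| ≤ ‖ξ.2‖}, exp (-(ξ.1 ^ 2 / ‖ξ.2‖ ^ 2) * t) * w ξ.2
        ∂(volume.prod ν)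
      ≤ √π / √t * ∫ y, ‖y‖ * w y ∂ν := by
  set cone := {ξ : ℝ × X | |ξ.1| ≤ ‖ξ.2‖}
  have hcone : MeasurableSet cone := measurableSet_le (by fun_prop) (by fun_prop)
  have hI : 0 ≤ ∫ y, ‖y‖ * w y ∂ν := integral_nonneg fun y => mul_nonneg (norm_nonneg y) (hw y)
  rw [integral_eq_lintegral_of_nonneg_ae
    (ae_of_all _ fun ξ => mul_nonneg (exp_pos _).le (hw _)) (by fun_prop)]
  refine ENNReal.toReal_le_of_le_ofReal (by positivity) ?_
  calc ∫⁻ ξ in cone, ENNReal.ofReal (exp (-(ξ.1 ^ 2 / ‖ξ.2‖ ^ 2) * t) * w ξ.2) ∂(volume.prod ν)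
      = ∫⁻ y, (∫⁻ x : ℝ, cone.indicator
          (fun ξ => ENNReal.ofReal (exp (-(ξ.1 ^ 2 / ‖ξ.2‖ ^ 2) * t)) * ENNReal.ofReal (w ξ.2))
          (x, y)) ∂ν := by
        simp_rw [ENNReal.ofReal_mul (exp_pos _).le]
        rw [← lintegral_indicator hcone,
          lintegral_prod_symm' _ ((by fun_prop : Measurable _).indicator hcone)]
    _ ≤ ∫⁻ y, ENNReal.ofReal (√π / √t * ‖y‖) * ENNReal.ofReal (w y) ∂ν :=
        lintegral_mono fun y =>
          lintegral_indicator_cone_section_le (fun y => ENNReal.ofReal (w y)) ht y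
    _ = ENNReal.ofReal (√π / √t * ∫ y, ‖y‖ * w y ∂ν) := by
        rw [ENNReal.ofReal_mul (by positivity), ofReal_integral_eq_lintegral_ofReal hint
          (ae_of_all _ fun y => mul_nonneg (norm_nonneg y) (hw y)),
          ← lintegral_const_mul' _ _ ENNReal.ofReal_ne_top]
        refine lintegral_congr fun y => ?_
        rw [← ENNReal.ofReal_mul (by positivity), ← ENNReal.ofReal_mul (by positivity), mul_assoc]

end Cone

open Module in
theorem integrable_norm_div_pow_finrank_mul_one_add_sq {E : Type*} [NormedAddCommGroup E]
    [NormedSpace ℝ E] [FiniteDimensional ℝ E] [MeasurableSpace E] [BorelSpace E]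
    (μ : Measure E) [μ.IsAddHaarMeasure] :
    Integrable (fun y : E => ‖y‖ / (‖y‖ ^ finrank ℝ E * (1 + ‖y‖ ^ 2))) μ := by
  rcases subsingleton_or_nontrivial E with hE | hE
  · simp [Subsingleton.elim _ (0 : E)]
  refine (integrable_fun_norm_addHaar μ (f := fun r => r / (r ^ finrank ℝ E * (1 + r ^ 2)))).2 ?_
  refine integrable_inv_one_add_sq.integrableOn.congr_fun (fun r (hr : 0 < r) => ?_)
    measurableSet_Ioi
  rw [smul_eq_mul, ← mul_div_assoc, ← pow_succ, Nat.sub_add_cancel finrank_pos, ← div_div,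
    div_self (by positivity), one_div]

theorem stmt15_general (n : ℕ) :
    ∃ C : ℝ, 0 < C ∧ ∀ t : ℝ, 0 < t →
      ∫ ξ in {ξ : ℝ × EuclideanSpace ℝ (Fin (n - 1)) | |ξ.1| ≤ ‖ξ.2‖},
          Real.exp (-(ξ.1 ^ 2 / ‖ξ.2‖ ^ 2) * t) / (‖ξ.2‖ ^ (n - 1) * (1 + ‖ξ.2‖ ^ 2))
        ≤ C * t ^ (-(1 : ℝ) / 2) := by
  set w : EuclideanSpace ℝ (Fin (n - 1)) → ℝ := fun y => (‖y‖ ^ (n - 1) * (1 + ‖y‖ ^ 2))⁻¹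
  have hint : Integrable (fun y => ‖y‖ * w y) := by
    simpa only [finrank_euclideanSpace_fin, div_eq_mul_inv] using
      integrable_norm_div_pow_finrank_mul_one_add_sq (volume : Measure (EuclideanSpace ℝ (Fin (n - 1))))
  refine ⟨√π * (∫ y, ‖y‖ * w y) + 1, by positivity, fun t ht => ?_⟩
  calc _ = ∫ ξ in {ξ : ℝ × EuclideanSpace ℝ (Fin (n - 1)) | |ξ.1| ≤ ‖ξ.2‖},
          exp (-(ξ.1 ^ 2 / ‖ξ.2‖ ^ 2) * t) * w ξ.2 ∂(volume.prod volume) := by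
        simp only [div_eq_mul_inv, w, Measure.volume_eq_prod]
    _ ≤ √π / √t * ∫ y, ‖y‖ * w y :=
        integral_cone_exp_mul_le _ (fun y => by positivity) (by fun_prop) hint ht
    _ ≤ (√π * (∫ y, ‖y‖ * w y) + 1) * (√t)⁻¹ := by
        rw [div_eq_mul_inv, mul_right_comm]
        gcongr
        linarith
    _ = _ := by
        congr 1
        rw [sqrt_eq_rpow, ← rpow_neg ht.le]
        norm_num

/-- for `n ≥ 3`, writing `ξ = (ξ₁, ξ') ∈ ℝ × ℝ^{n-1}`,
`∫_{|ξ₁| ≤ |ξ'|} e^{-(ξ₁²/|ξ'|²)t} / (|ξ'|^{n-1}(1+|ξ'|²)) dξ ≤ C t^{-1/2}`. -/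
theorem stmt15 (n : ℕ) (hn : 3 ≤ n) :
    ∃ C : ℝ, 0 < C ∧ ∀ t : ℝ, 0 < t →
      ∫ ξ in {ξ : ℝ × EuclideanSpace ℝ (Fin (n - 1)) | |ξ.1| ≤ ‖ξ.2‖},
          Real.exp (-(ξ.1 ^ 2 / ‖ξ.2‖ ^ 2) * t) / (‖ξ.2‖ ^ (n - 1) * (1 + ‖ξ.2‖ ^ 2))
        ≤ C * t ^ (-(1 : ℝ) / 2) :=
  stmt15_general n
end
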